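/- For the 4-stage fourth-order coefficients of Castella et al. type with a₁ = a₂ = 1/4: the complex weights (b₁, b₂, b₃, b₂, b₁) at nodes (0, 1/4, 1/2, 3/4, 1) solving Σwᵢ = 1, Σwᵢcᵢ(1−cᵢ) = 1/6, Σ(1/2)wᵢ²cᵢ + Σ_{i<j}wᵢwⱼcⱼ = 1/3 come in exactly one complex-conjugate pair of solutions (b₁,b₂,b₃) ∈ ℂ³ with b₃ = 1 − 2b₁ − 2b₂. -/

import Mathlib

/-!
The first two order conditions are linear and give `b₁ = 1/6 - b₂/4`, `b₃ = 2/3 - 3b₂/2`.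
Substituting, the third becomes `(b₂ - 4/15)² = -(2/15)²`, whose roots `4/15 ± 2i/15` are
conjugate and distinct; since the parametrisation by `b₂` has real coefficients, it commutes
with conjugation.
-/

open Complex

/-- The order conditions for the symmetric 4-stage BAB composition with nodes
`(0, 1/4, 1/2, 3/4, 1)` and weights `(b₁, b₂, b₃, b₂, b₁)`. -/
def babOrder4Conditions (q : ℂ × ℂ × ℂ) : Prop :=
  let b₁ := q.1; let b₂ := q.2.1; let b₃ := q.2.2
  let c₁ : ℂ := 0; let c₂ : ℂ := 1 / 4; let c₃ : ℂ := 1 / 2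
  let c₄ : ℂ := 3 / 4; let c₅ : ℂ := 1
  (2 * (b₁ + b₂) + b₃ = 1) ∧
  (b₁ * c₁ * (1 - c₁) + b₂ * c₂ * (1 - c₂) + b₃ * c₃ * (1 - c₃)
    + b₂ * c₄ * (1 - c₄) + b₁ * c₅ * (1 - c₅) = 1 / 6) ∧
  ((1 / 2) * (b₁ ^ 2 * c₁ + b₂ ^ 2 * c₂ + b₃ ^ 2 * c₃ + b₂ ^ 2 * c₄ + b₁ ^ 2 * c₅)
    + (b₁ * b₂ * c₂ + b₁ * b₃ * c₃ + b₁ * b₂ * c₄ + b₁ * b₁ * c₅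
      + b₂ * b₃ * c₃ + b₂ * b₂ * c₄ + b₂ * b₁ * c₅
      + b₃ * b₂ * c₄ + b₃ * b₁ * c₅
      + b₂ * b₁ * c₅) = 1 / 3)

open ComplexConjugate

noncomputable def babWeights (b : ℂ) : ℂ × ℂ × ℂ := (1 / 6 - b / 4, b, 2 / 3 - 3 / 2 * b)

lemma babWeights_injective : Function.Injective babWeights :=
  fun _ _ h => congrArg (fun q : ℂ × ℂ × ℂ => q.2.1) h

lemma conj_babWeights (b : ℂ) :
    (conj (babWeights b).1, conj (babWeights b).2.1, conj (babWeights b).2.2)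
      = babWeights (conj b) := by
  simp [babWeights, map_ofNat]

lemma setOf_babOrder4Conditions :
    {q | babOrder4Conditions q} = babWeights '' {b | (b - 4 / 15) ^ 2 = -(2 / 15) ^ 2} := by
  ext ⟨b₁, b₂, b₃⟩
  simp only [Set.mem_ofPred_eq, Set.mem_image, babOrder4Conditions, babWeights, Prod.mk.injEq]
  constructor
  · rintro ⟨h₁, h₂, h₃⟩
    have hb₁ : b₁ = 1 / 6 - b₂ / 4 := by linear_combination (1 / 2) * h₁ - 2 * h₂
    have hb₃ : b₃ = 2 / 3 - 3 / 2 * b₂ := by linear_combination 4 * h₂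
    subst hb₁ hb₃
    exact ⟨b₂, by linear_combination (-32 / 5) * h₃, rfl, rfl, rfl⟩
  · rintro ⟨b, hb, rfl, rfl, rfl⟩
    exact ⟨by ring, by ring, by linear_combination (-5 / 32) * hb⟩

lemma setOf_sq_sub_eq_neg_sq (z w : ℂ) :
    {b : ℂ | (b - z) ^ 2 = -w ^ 2} = {z + w * I, z - w * I} := by
  ext b
  have hw : -w ^ 2 = (w * I) ^ 2 := by rw [mul_pow, I_sq]; ring
  simp only [Set.mem_ofPred_eq, Set.mem_insert_iff, Set.mem_singleton_iff, hw,
    sq_eq_sq_iff_eq_or_eq_neg, sub_eq_iff_eq_add', ← sub_eq_add_neg]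

theorem stmt_18 :
    ∃ p : ℂ × ℂ × ℂ,
      {q : ℂ × ℂ × ℂ | babOrder4Conditions q}
        = {p, (starRingEnd ℂ p.1, starRingEnd ℂ p.2.1, starRingEnd ℂ p.2.2)} ∧
      p ≠ (starRingEnd ℂ p.1, starRingEnd ℂ p.2.1, starRingEnd ℂ p.2.2) := by
  have hconj : conj (4 / 15 + 2 / 15 * I : ℂ) = 4 / 15 - 2 / 15 * I := by
    simp [map_ofNat, sub_eq_add_neg]
  refine ⟨babWeights (4 / 15 + 2 / 15 * I), ?_, ?_⟩ <;> rw [conj_babWeights, hconj]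
  · rw [setOf_babOrder4Conditions, setOf_sq_sub_eq_neg_sq, Set.image_pair]
  · refine babWeights_injective.ne fun h => ?_
    have := congrArg im h
    norm_num at this
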